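/- For the string rewriting system ⟨ a, b | α: a ⇒ b, β: b ⇒ a ⟩ with quasi-normal forms chosen as ~u = a^{|u|}, the labelling to the quasi-normal form satisfies ψ(u₁ f u₂) = d(u₁, a^{|u₁|}) + ψ(f) + d(u₂, a^{|u₂|}) for every rewriting step f and all words u₁, u₂; consequently this labelling is compatible with contexts. -/

import Mathlib

/-!
The distance from `u` to `a^{|u|}` is the number of `b`'s in `u`: erasing the `b`'s one by one
with `β` reaches `a^{|u|}` in that many steps, and each step changes the number of `b`'s by one.
The labelling is therefore additive under concatenation, so whiskering a rewriting sequence by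
`u₁, u₂` adds the same constant `|u₁|_b + |u₂|_b` to every label, which keeps strict decrease.
-/

/-- The alphabet `{a, b}`. -/
inductive AB : Type
  | a : AB
  | b : AB

open AB

/-- The rules `α : a ⇒ b` and `β : b ⇒ a`. -/
inductive ABRule : List AB → List AB → Prop
  | alpha : ABRule [a] [b]
  | beta : ABRule [b] [a]

/-- One-step rewriting relation of a string rewriting system `R`. -/
def Step {A : Type*} (R : List A → List A → Prop) (u v : List A) : Prop :=
  ∃ l r x y, R x y ∧ u = l ++ x ++ r ∧ v = l ++ y ++ r

/-- `StepN R n u v`: there is a rewriting sequence of length `n` from `u` to `v`. -/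
inductive StepN {A : Type*} (R : List A → List A → Prop) : ℕ → List A → List A → Prop
  | refl (u : List A) : StepN R 0 u u
  | head {n : ℕ} {u v w : List A} : Step R u v → StepN R n v w → StepN R (n + 1) u w

/-- Distance: length of a shortest rewriting sequence. -/
noncomputable def dist {A : Type*} (R : List A → List A → Prop) (u v : List A) : ℕ :=
  sInf {n | StepN R n u v}

/-- The chosen quasi-normal form `~u = a^{|u|}`. -/
def nf (u : List AB) : List AB := List.replicate u.length a

/-- The QNF labelling: the label of a step is the distance from its target to
the chosen quasi-normal form of the target. -/
noncomputable def ψ (u : List AB) : ℕ := dist ABRule u (nf u)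

/-- Labels of the successive steps of a rewriting sequence. -/
noncomputable def chainLabels : List AB → List (List AB) → List ℕ
  | _, [] => []
  | _, w :: l => ψ w :: chainLabels w l

instance : DecidableEq AB := fun x y => by
  cases x <;> cases y <;> first | exact isTrue rfl | exact isFalse (by simp)

section Whiskering

variable {A : Type*} {R : List A → List A → Prop}

theorem Step.append_append {x y : List A} (h : Step R x y) (u₁ u₂ : List A) :
    Step R (u₁ ++ x ++ u₂) (u₁ ++ y ++ u₂) := by
  obtain ⟨l, r, p, q, hpq, rfl, rfl⟩ := h
  exact ⟨u₁ ++ l, r ++ u₂, p, q, hpq, by simp, by simp⟩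

theorem StepN.append_append {n : ℕ} {x y : List A} (h : StepN R n x y) (u₁ u₂ : List A) :
    StepN R n (u₁ ++ x ++ u₂) (u₁ ++ y ++ u₂) := by
  induction h with
  | refl => exact .refl _
  | head hs _ ih => exact .head (hs.append_append u₁ u₂) ih

theorem isChain_step_append_append {v : List A} {l : List (List A)}
    (h : List.IsChain (Step R) (v :: l)) (u₁ u₂ : List A) :
    List.IsChain (Step R) ((u₁ ++ v ++ u₂) :: l.map fun z => u₁ ++ z ++ u₂) :=
  List.isChain_cons_map_of_isChain_cons _ (fun _ _ hs => hs.append_append u₁ u₂) h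

theorem getLast_cons_map_append_append (v : List A) (l : List (List A)) (u₁ u₂ : List A) :
    ((u₁ ++ v ++ u₂) :: l.map fun z => u₁ ++ z ++ u₂).getLast (by simp) =
      u₁ ++ (v :: l).getLast (by simp) ++ u₂ :=
  List.getLast_map (f := fun z => u₁ ++ z ++ u₂) (l := v :: l) (by simp)

end Whiskering

theorem stepN_nf (u : List AB) : StepN ABRule (u.count b) u (nf u) := by
  induction u with
  | nil => exact .refl _
  | cons c t ih =>
    have hcons : StepN ABRule (t.count b) (a :: t) (a :: nf t) := by
      simpa using ih.append_append [a] []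
    cases c with
    | a => simpa [nf, List.replicate_succ] using hcons
    | b =>
      have hβ : Step ABRule (b :: t) (a :: t) := ⟨[], t, [b], [a], .beta, rfl, rfl⟩
      simpa [nf, List.replicate_succ] using StepN.head hβ hcons

theorem Step.count_b_le {u v : List AB} (h : Step ABRule u v) :
    u.count b ≤ v.count b + 1 := by
  obtain ⟨l, r, p, q, hpq, rfl, rfl⟩ := h
  cases hpq <;> simp <;> omega

theorem StepN.count_b_le {n : ℕ} {u v : List AB} (h : StepN ABRule n u v) :
    u.count b ≤ v.count b + n := by
  induction h with
  | refl => simp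
  | head hs _ ih => have := hs.count_b_le; omega

theorem dist_nf (u : List AB) : dist ABRule u (nf u) = u.count b := by
  refine le_antisymm (Nat.sInf_le (stepN_nf u)) (le_csInf ⟨_, stepN_nf u⟩ fun n hn => ?_)
  simpa [nf, List.count_replicate] using hn.count_b_le

theorem ψ_eq_count (u : List AB) : ψ u = u.count b := dist_nf u

theorem ψ_append_append (u₁ z u₂ : List AB) :
    ψ (u₁ ++ z ++ u₂) = u₁.count b + ψ z + u₂.count b := by
  simp only [ψ_eq_count, List.count_append]

theorem chainLabels_eq_map (w : List AB) (l : List (List AB)) : chainLabels w l = l.map ψ := by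
  induction l generalizing w with
  | nil => rfl
  | cons z t ih => simp [chainLabels, ih]

theorem chainLabels_append_append_lt {v : List AB} {l : List (List AB)}
    (h : ∀ k ∈ chainLabels v l, k < ψ v) (u₁ u₂ : List AB) :
    ∀ k ∈ chainLabels (u₁ ++ v ++ u₂) (l.map fun z => u₁ ++ z ++ u₂), k < ψ (u₁ ++ v ++ u₂) := by
  simp only [chainLabels_eq_map, List.map_map, List.mem_map, Function.comp_apply,
    forall_exists_index, and_imp, forall_apply_eq_imp_iff₂, ψ_append_append] at h ⊢
  intro z hz
  have := h z hz
  omega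

/-- For `⟨ a, b | a ⇒ b, b ⇒ a ⟩` with quasi-normal forms `~u = a^{|u|}`, the QNF
labelling satisfies `ψ(u₁ f u₂) = d(u₁, a^{|u₁|}) + ψ(f) + d(u₂, a^{|u₂|})`;
consequently it is compatible with contexts: whiskering any strictly decreasing
confluence diagram of a local branching yields a strictly decreasing diagram. -/
theorem ab_qnf_labelling_compatible :
    (∀ (x y u₁ u₂ : List AB), Step ABRule x y →
      ψ (u₁ ++ y ++ u₂) = dist ABRule u₁ (nf u₁) + ψ y + dist ABRule u₂ (nf u₂)) ∧
    (∀ (u v w : List AB) (lf lg : List (List AB)), Step ABRule u v → Step ABRule u w →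
      List.Chain (Step ABRule) v lf → List.Chain (Step ABRule) w lg →
      (v :: lf).getLast (by simp) = (w :: lg).getLast (by simp) →
      (∀ k ∈ chainLabels v lf, k < ψ v) →
      (∀ k ∈ chainLabels w lg, k < ψ w) →
      ∀ u₁ u₂ : List AB,
        List.Chain (Step ABRule) (u₁ ++ v ++ u₂) (lf.map fun z => u₁ ++ z ++ u₂) ∧
        List.Chain (Step ABRule) (u₁ ++ w ++ u₂) (lg.map fun z => u₁ ++ z ++ u₂) ∧
        ((u₁ ++ v ++ u₂) :: (lf.map fun z => u₁ ++ z ++ u₂)).getLast (by simp) =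
          ((u₁ ++ w ++ u₂) :: (lg.map fun z => u₁ ++ z ++ u₂)).getLast (by simp) ∧
        (∀ k ∈ chainLabels (u₁ ++ v ++ u₂) (lf.map fun z => u₁ ++ z ++ u₂),
          k < ψ (u₁ ++ v ++ u₂)) ∧
        (∀ k ∈ chainLabels (u₁ ++ w ++ u₂) (lg.map fun z => u₁ ++ z ++ u₂),
          k < ψ (u₁ ++ w ++ u₂))) := by
  refine ⟨fun x y u₁ u₂ _ => by rw [ψ_append_append, dist_nf, dist_nf], ?_⟩
  intro u v w lf lg _ _ hv hw hlast hlv hlw u₁ u₂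
  refine ⟨isChain_step_append_append hv u₁ u₂, isChain_step_append_append hw u₁ u₂, ?_,
    chainLabels_append_append_lt hlv u₁ u₂, chainLabels_append_append_lt hlw u₁ u₂⟩
  rw [getLast_cons_map_append_append, getLast_cons_map_append_append, hlast]
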